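/- arXiv:2303.09642 — 2 statements merged into one kernel-verified Lean document; each statement's English description precedes it below -/
import Mathlib

section
/- In one dimension, Tweedie's formula holds: if x has density p on ℝ, ν ~ N(0,σ²) is independent of x, and q(r) = ∫ p(t) φ_σ(r − t) dt is the density of r = x + ν (with φ_σ the N(0,σ²) density), then E[x | x + ν = r] = r + σ² q'(r)/q(r) whenever q(r) > 0. -/
/-!
The Gaussian kernel solves `φ_σ'(u) = -(u / σ²) φ_σ(u)`, and both `φ_σ` and `u φ_σ(u)` are bounded,
so for integrable `p` one may differentiate `q(r) = ∫ p(t) φ_σ(r - t) dt` under the integral sign: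
`σ² q'(r) = ∫ (t - r) p(t) φ_σ(r - t) dt`. Hence `∫ t p(t) φ_σ(r - t) dt = r q(r) + σ² q'(r)`, and
dividing by `q(r) > 0` gives the formula.
-/

open MeasureTheory Real

section KernelSmoothing

variable {p g k k' : ℝ → ℝ} {B C : ℝ}

theorem integrable_mul_comp_sub (hp : Integrable p) (hg : Measurable g)
    (hg_bdd : ∀ u, ‖g u‖ ≤ C) (x : ℝ) : Integrable fun t ↦ p t * g (x - t) :=
  hp.mul_bdd (hg.comp (measurable_const.sub measurable_id)).aestronglyMeasurable
    (.of_forall fun t ↦ hg_bdd (x - t))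

theorem hasDerivAt_integral_mul_comp_sub (hp : Integrable p)
    (hk : ∀ u, HasDerivAt k (k' u) u) (hk_bdd : ∀ u, ‖k u‖ ≤ B)
    (hk'_bdd : ∀ u, ‖k' u‖ ≤ C)
    (x : ℝ) : HasDerivAt (fun y ↦ ∫ t, p t * k (y - t)) (∫ t, p t * k' (x - t)) x := by
  have hk_meas : Measurable k :=
    (Differentiable.continuous fun u ↦ (hk u).differentiableAt).measurable
  have hk'_meas : Measurable k' := by
    rw [show k' = deriv k from funext fun u ↦ (hk u).deriv.symm]
    exact measurable_deriv k
  refine (hasDerivAt_integral_of_dominated_loc_of_deriv_le (F' := fun y t ↦ p t * k' (y - t))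
    (bound := fun t ↦ C * ‖p t‖)
    Filter.univ_mem (.of_forall fun y ↦ (integrable_mul_comp_sub hp hk_meas hk_bdd y).1)
    (integrable_mul_comp_sub hp hk_meas hk_bdd x)
    (integrable_mul_comp_sub hp hk'_meas hk'_bdd x).1 ?_ (hp.norm.const_mul C) ?_).2
  · refine .of_forall fun t y _ ↦ ?_
    rw [norm_mul, mul_comm]
    exact mul_le_mul_of_nonneg_right (hk'_bdd _) (norm_nonneg _)
  · refine .of_forall fun t y _ ↦ ?_
    simpa using ((hk (y - t)).comp y ((hasDerivAt_id y).sub_const t)).const_mul (p t)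

theorem integral_mul_mul_comp_sub_eq (hp : Integrable p) {s : ℝ} (hs : s ≠ 0)
    (hk : ∀ u, HasDerivAt k (-u / s * k u) u) (hk_bdd : ∀ u, ‖k u‖ ≤ B)
    (hk_mom : ∀ u, ‖u * k u‖ ≤ C) (x : ℝ) :
    ∫ t, t * p t * k (x - t) =
      x * (∫ t, p t * k (x - t)) + s * deriv (fun y ↦ ∫ t, p t * k (y - t)) x := by
  have hk'_bdd (u : ℝ) : ‖-u / s * k u‖ ≤ C / |s| := by
    rw [neg_div, neg_mul, norm_neg, div_mul_eq_mul_div, norm_div, Real.norm_eq_abs s]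
    gcongr
    exact hk_mom u
  have hk_cont : Continuous k := Differentiable.continuous fun u ↦ (hk u).differentiableAt
  have hderiv := hasDerivAt_integral_mul_comp_sub hp hk hk_bdd hk'_bdd x
  rw [hderiv.deriv, ← integral_const_mul, ← integral_const_mul,
    ← integral_add ((integrable_mul_comp_sub hp hk_cont.measurable hk_bdd x).const_mul x)
      ((integrable_mul_comp_sub hp (by fun_prop) hk'_bdd x).const_mul s)]
  congr 1 with t
  field_simp
  ring

end KernelSmoothing

noncomputable def gaussianKernel (σ u : ℝ) : ℝ :=
  (σ * √(2 * π))⁻¹ * exp (-u ^ 2 / (2 * σ ^ 2))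

theorem hasDerivAt_gaussianKernel (σ u : ℝ) :
    HasDerivAt (gaussianKernel σ) (-u / σ ^ 2 * gaussianKernel σ u) u := by
  have h : HasDerivAt (fun u ↦ -u ^ 2 / (2 * σ ^ 2)) (-u / σ ^ 2) u := by
    refine ((hasDerivAt_pow 2 u).fun_neg.div_const (2 * σ ^ 2)).congr_deriv ?_
    field_simp
    ring
  exact (h.exp.const_mul _).congr_deriv (by rw [gaussianKernel]; ring)

theorem norm_gaussianKernel_le {σ : ℝ} (hσ : 0 < σ) (u : ℝ) :
    ‖gaussianKernel σ u‖ ≤ (σ * √(2 * π))⁻¹ := by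
  rw [gaussianKernel, Real.norm_eq_abs, abs_of_nonneg (by positivity)]
  refine mul_le_of_le_one_right (by positivity) (exp_le_one_iff.2 ?_)
  rw [neg_div]
  exact neg_nonpos.2 (by positivity)

theorem abs_mul_exp_neg_sq_div_le {σ : ℝ} (hσ : 0 < σ) (u : ℝ) :
    |u| * exp (-u ^ 2 / (2 * σ ^ 2)) ≤ σ := by
  have h : |u| ≤ σ * exp (u ^ 2 / (2 * σ ^ 2)) :=
    calc |u| ≤ σ * (u ^ 2 / (2 * σ ^ 2) + 1) := by
          field_simp
          nlinarith [sq_nonneg (|u| - σ), sq_abs u]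
      _ ≤ σ * exp (u ^ 2 / (2 * σ ^ 2)) := by gcongr; exact add_one_le_exp _
  rwa [neg_div, exp_neg, ← div_eq_mul_inv, div_le_iff₀ (exp_pos _)]

theorem norm_mul_gaussianKernel_le {σ : ℝ} (hσ : 0 < σ) (u : ℝ) :
    ‖u * gaussianKernel σ u‖ ≤ (√(2 * π))⁻¹ := by
  have h := abs_mul_exp_neg_sq_div_le hσ u
  rw [gaussianKernel, Real.norm_eq_abs, abs_mul, abs_mul, abs_of_pos (exp_pos _),
    abs_of_pos (by positivity : 0 < (σ * √(2 * π))⁻¹)]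
  calc |u| * ((σ * √(2 * π))⁻¹ * exp (-u ^ 2 / (2 * σ ^ 2)))
      = (σ * √(2 * π))⁻¹ * (|u| * exp (-u ^ 2 / (2 * σ ^ 2))) := by ring
    _ ≤ (σ * √(2 * π))⁻¹ * σ := by gcongr
    _ = (√(2 * π))⁻¹ := by field_simp

theorem tweedie_formula_one_dim_general
    (σ : ℝ) (hσ : 0 < σ)
    (p : ℝ → ℝ)
    (hp_int : ∫ t, p t = 1)
    (φ : ℝ → ℝ)
    (hφ : ∀ u, φ u = (σ * Real.sqrt (2 * π))⁻¹ * Real.exp (-u ^ 2 / (2 * σ ^ 2)))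
    (q : ℝ → ℝ)
    (hq : ∀ r, q r = ∫ t, p t * φ (r - t))
    (D : ℝ → ℝ)
    (hD : ∀ r, D r = (∫ t, t * p t * φ (r - t)) / q r)
    (r : ℝ) (hr : 0 < q r) :
    D r = r + σ ^ 2 * (deriv q r / q r) := by
  -- a non-integrable `p` would have Bochner integral `0`
  have hp : Integrable p := by
    by_contra h
    simp [integral_undef h] at hp_int
  obtain rfl : φ = gaussianKernel σ := funext hφ
  obtain rfl : q = fun y ↦ ∫ t, p t * gaussianKernel σ (y - t) := funext hq
  rw [hD, integral_mul_mul_comp_sub_eq hp (pow_ne_zero 2 hσ.ne') (hasDerivAt_gaussianKernel σ)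
    (norm_gaussianKernel_le hσ) (norm_mul_gaussianKernel_le hσ)]
  field_simp [hr.ne']

/-- Tweedie's formula in one dimension. -/
theorem tweedie_formula_one_dim
    (σ : ℝ) (hσ : 0 < σ)
    (p : ℝ → ℝ)
    (hp_meas : Measurable p)
    (hp_nonneg : ∀ t, 0 ≤ p t)
    (hp_int : ∫ t, p t = 1)
    (hp_mom : Integrable (fun t => |t| * p t))
    (φ : ℝ → ℝ)
    (hφ : ∀ u, φ u = (σ * Real.sqrt (2 * π))⁻¹ * Real.exp (-u ^ 2 / (2 * σ ^ 2)))
    (q : ℝ → ℝ)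
    (hq : ∀ r, q r = ∫ t, p t * φ (r - t))
    (D : ℝ → ℝ)
    (hD : ∀ r, D r = (∫ t, t * p t * φ (r - t)) / q r)
    (r : ℝ) (hr : 0 < q r) :
    D r = r + σ ^ 2 * (deriv q r / q r) :=
  tweedie_formula_one_dim_general σ hσ p hp_int φ hφ q hq D hD r hr
end

section
/- The denoiser residual equals the scaled score: under the hypotheses of Tweedie's formula in one dimension, the score of the smoothed density satisfies (log q)'(r) = (D_σ(r) − r)/σ², where D_σ(r) = E[x | x + ν = r] and q is the density of x + ν. -/
open MeasureTheory Real

/-!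
Differentiating under the integral sign (the Gaussian `φ` and its derivative `φ' u = -u φ u / σ²`
are bounded, so the integrable `p` dominates) gives
`σ² q'(r) = ∫ p t (t - r) φ (r - t) dt = (D r - r) q r`; then divide by `q r > 0`.
-/

section Convolution

variable {p φ : ℝ → ℝ}

theorem integrable_mul_comp_sub_s2 (hp : Integrable p) (hφ : Continuous φ) {A : ℝ}
    (hφA : ∀ u, ‖φ u‖ ≤ A) (r : ℝ) : Integrable fun t => p t * φ (r - t) :=
  hp.mul_bdd (hφ.comp (continuous_const.sub continuous_id)).aestronglyMeasurable
    (.of_forall fun t => hφA (r - t))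

theorem integrable_mul_mul_comp_sub (hp : Integrable p) (hφ : Continuous φ) {A B : ℝ}
    (hφA : ∀ u, ‖φ u‖ ≤ A) (hφB : ∀ u, ‖u * φ u‖ ≤ B) (r : ℝ) :
    Integrable fun t => t * p t * φ (r - t) := by
  refine ((integrable_mul_comp_sub_s2 hp hφ hφA r).const_mul r |>.sub
    (integrable_mul_comp_sub_s2 hp (continuous_id.mul hφ) hφB r)).congr (.of_forall fun t => ?_)
  simp only [Pi.sub_apply, Pi.mul_apply, id]
  ring

theorem hasDerivAt_integral_mul_comp_sub_s2 (hp : Integrable p) (hφ : Differentiable ℝ φ)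
    {A B : ℝ} (hφA : ∀ u, ‖φ u‖ ≤ A) (hφB : ∀ u, ‖deriv φ u‖ ≤ B) (s : ℝ) :
    HasDerivAt (fun s => ∫ t, p t * φ (s - t)) (∫ t, p t * deriv φ (s - t)) s := by
  refine (hasDerivAt_integral_of_dominated_loc_of_deriv_le (bound := fun t => ‖p t‖ * B)
    (F' := fun s t => p t * deriv φ (s - t)) Filter.univ_mem
    (.of_forall fun s => (integrable_mul_comp_sub_s2 hp hφ.continuous hφA s).aestronglyMeasurable)
    (integrable_mul_comp_sub_s2 hp hφ.continuous hφA s)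
    (hp.aestronglyMeasurable.mul
      ((measurable_deriv φ).comp (measurable_const.sub measurable_id)).aestronglyMeasurable)
    (.of_forall fun t s _ => ?_) (hp.norm.mul_const B) (.of_forall fun t s _ => ?_)).2
  · rw [norm_mul]
    exact mul_le_mul_of_nonneg_left (hφB _) (norm_nonneg _)
  · exact ((hφ (s - t)).hasDerivAt.comp_sub_const s t).const_mul (p t)

end Convolution

section Gaussian

variable (c : ℝ)

theorem hasDerivAt_const_mul_exp_neg_sq_div (σ u : ℝ) :
    HasDerivAt (fun u => c * exp (-u ^ 2 / (2 * σ ^ 2)))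
      (-(u / σ ^ 2) * (c * exp (-u ^ 2 / (2 * σ ^ 2)))) u := by
  refine ((((hasDerivAt_id u).pow 2).neg.div_const (2 * σ ^ 2)).exp.const_mul c).congr_deriv ?_
  simp only [Pi.neg_apply, Pi.pow_apply, id, Nat.cast_ofNat, Nat.add_one_sub_one, pow_one,
    mul_one]
  ring

theorem norm_const_mul_exp_neg_sq_div_le (σ u : ℝ) :
    ‖c * exp (-u ^ 2 / (2 * σ ^ 2))‖ ≤ |c| := by
  rw [norm_mul, norm_of_nonneg (exp_nonneg _), Real.norm_eq_abs]
  refine mul_le_of_le_one_right (abs_nonneg c) (exp_le_one_iff.2 ?_)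
  exact div_nonpos_of_nonpos_of_nonneg (neg_nonpos.2 (sq_nonneg u)) (by positivity)

theorem norm_mul_const_mul_exp_neg_sq_div_le {σ : ℝ} (hσ : 0 < σ) (u : ℝ) :
    ‖u * (c * exp (-u ^ 2 / (2 * σ ^ 2)))‖ ≤ σ * |c| := by
  rw [mul_left_comm, norm_mul, norm_mul, norm_of_nonneg (exp_nonneg _), Real.norm_eq_abs,
    Real.norm_eq_abs, mul_comm σ]
  exact mul_le_mul_of_nonneg_left (abs_mul_exp_neg_sq_div_le hσ u) (abs_nonneg c)

theorem norm_deriv_const_mul_exp_neg_sq_div_le {σ : ℝ} (hσ : 0 < σ) (u : ℝ) :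
    ‖deriv (fun u => c * exp (-u ^ 2 / (2 * σ ^ 2))) u‖ ≤ |c| / σ := by
  rw [(hasDerivAt_const_mul_exp_neg_sq_div c σ u).deriv, neg_mul, norm_neg, div_mul_eq_mul_div,
    norm_div, norm_pow, Real.norm_eq_abs σ, abs_of_pos hσ, div_le_div_iff₀ (by positivity) hσ]
  calc ‖u * (c * exp (-u ^ 2 / (2 * σ ^ 2)))‖ * σ ≤ σ * |c| * σ := by
        gcongr
        exact norm_mul_const_mul_exp_neg_sq_div_le c hσ u
    _ = |c| * σ ^ 2 := by ring

end Gaussian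

theorem score_eq_denoiser_residual_general
    (σ : ℝ) (hσ : 0 < σ)
    (p : ℝ → ℝ)
    (hp_int : ∫ t, p t = 1)
    (φ : ℝ → ℝ)
    (hφ : ∀ u, φ u = (σ * Real.sqrt (2 * π))⁻¹ * Real.exp (-u ^ 2 / (2 * σ ^ 2)))
    (q : ℝ → ℝ)
    (hq : ∀ r, q r = ∫ t, p t * φ (r - t))
    (D : ℝ → ℝ)
    (hD : ∀ r, D r = (∫ t, t * p t * φ (r - t)) / q r)
    (r : ℝ) (hr : 0 < q r) :
    deriv (fun s => Real.log (q s)) r = (D r - r) / σ ^ 2 := by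
  set c := (σ * Real.sqrt (2 * π))⁻¹
  have hφ_eq : φ = fun u => c * exp (-u ^ 2 / (2 * σ ^ 2)) := funext hφ
  have hp : Integrable p := .of_integral_ne_zero (by rw [hp_int]; exact one_ne_zero)
  have hφ' (u : ℝ) : HasDerivAt φ (-(u / σ ^ 2) * φ u) u := by
    simpa only [← hφ, ← hφ_eq] using hasDerivAt_const_mul_exp_neg_sq_div c σ u
  have hφ_diff : Differentiable ℝ φ := fun u => (hφ' u).differentiableAt
  have hφ_le (u : ℝ) : ‖φ u‖ ≤ |c| := hφ u ▸ norm_const_mul_exp_neg_sq_div_le c σ u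
  have hq' : HasDerivAt q (∫ t, p t * (-((r - t) / σ ^ 2) * φ (r - t))) r := by
    rw [funext hq]
    simpa only [(hφ' _).deriv] using hasDerivAt_integral_mul_comp_sub_s2 hp hφ_diff hφ_le
      (fun u => hφ_eq ▸ norm_deriv_const_mul_exp_neg_sq_div_le c hσ u) r
  have hsplit : (fun t => p t * (-((r - t) / σ ^ 2) * φ (r - t)))
      = fun t => (t * p t * φ (r - t) - r * (p t * φ (r - t))) / σ ^ 2 := by
    funext t
    ring
  rw [(hq'.log hr.ne').deriv, hsplit, integral_div,
    integral_sub (integrable_mul_mul_comp_sub hp hφ_diff.continuous hφ_le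
      (fun u => hφ u ▸ norm_mul_const_mul_exp_neg_sq_div_le c hσ u) r)
      ((integrable_mul_comp_sub_s2 hp hφ_diff.continuous hφ_le r).const_mul r),
    integral_const_mul, ← hq, hD]
  field_simp

/-- The denoiser residual equals the scaled score:
`(log q)'(r) = (D_σ(r) − r) / σ²` in one dimension. -/
theorem score_eq_denoiser_residual
    (σ : ℝ) (hσ : 0 < σ)
    (p : ℝ → ℝ)
    (hp_meas : Measurable p)
    (hp_nonneg : ∀ t, 0 ≤ p t)
    (hp_int : ∫ t, p t = 1)
    (hp_mom : Integrable (fun t => |t| * p t))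
    (φ : ℝ → ℝ)
    (hφ : ∀ u, φ u = (σ * Real.sqrt (2 * π))⁻¹ * Real.exp (-u ^ 2 / (2 * σ ^ 2)))
    (q : ℝ → ℝ)
    (hq : ∀ r, q r = ∫ t, p t * φ (r - t))
    (D : ℝ → ℝ)
    (hD : ∀ r, D r = (∫ t, t * p t * φ (r - t)) / q r)
    (r : ℝ) (hr : 0 < q r) :
    deriv (fun s => Real.log (q s)) r = (D r - r) / σ ^ 2 :=
  score_eq_denoiser_residual_general σ hσ p hp_int φ hφ q hq D hD r hr
end
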